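/- arXiv:1607.05471 — 2 statements merged into one kernel-verified Lean document; each statement's English description precedes it below -/
import Mathlib

section
/- The weights λ_m^j satisfy the convolution-type inequality Σ_{k∈V_m} λ_m^{j−k} ≤ ρ|V_m| λ_m^j for every j ∈ ℤ^d. -/
/-! The identity `(ρ|V_m| − κ̃_m) λ̃_m = h` holds pointwise on the torus. Since `V_m = −V_m`, the
Fourier coefficients of `κ̃_m λ̃_m` are the sums `Σ_{k∈V_m} λ_m^{j−k}`, and those of the constant `h`
are `h δ_{j,0}`. Hence `ρ|V_m| λ_m^j − Σ_{k∈V_m} λ_m^{j−k} = h δ_{j,0} ≥ 0`. -/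

open MeasureTheory Real Filter

/-- The cube `V_m = {j ∈ ℤ^d : |j(l)| ≤ m for all l}`. -/
noncomputable def cube (d m : ℕ) : Finset (Fin d → ℤ) :=
  Finset.Icc (fun _ => -(m : ℤ)) (fun _ => (m : ℤ))

/-- `κ̃_m(θ) = Σ_{k ∈ V_m} exp(−i⟨θ,k⟩)`, which is real-valued:
it equals `Σ_{k ∈ V_m} cos(⟨θ,k⟩)`. -/
noncomputable def ktilde (d m : ℕ) (θ : Fin d → ℝ) : ℝ :=
  ∑ k ∈ cube d m, Real.cos (∑ l, θ l * (k l : ℝ))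

/-- The box `[−π,π]^d`. -/
def box (d : ℕ) : Set (Fin d → ℝ) :=
  Set.Icc (fun _ => -Real.pi) (fun _ => Real.pi)

/-- `λ̃_m(θ) = h (ρ|V_m| − κ̃_m(θ))⁻¹`. -/
noncomputable def lamTilde (d m : ℕ) (ρ h : ℝ) (θ : Fin d → ℝ) : ℝ :=
  h * (ρ * (2 * (m : ℝ) + 1) ^ d - ktilde d m θ)⁻¹

/-- The Fourier coefficient `λ_m^j = (2π)^{-d} ∫_{[−π,π]^d} exp(i⟨θ,j⟩) λ̃_m(θ) dθ`
(real-valued, equal to the cosine integral). -/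
noncomputable def lam (d m : ℕ) (ρ h : ℝ) (j : Fin d → ℤ) : ℝ :=
  ((2 * Real.pi) ^ d)⁻¹ *
    ∫ θ in box d, Real.cos (∑ l, θ l * (j l : ℝ)) * lamTilde d m ρ h θ


lemma card_cube (d m : ℕ) : ((cube d m).card : ℝ) = (2 * (m : ℝ) + 1) ^ d := by
  rw [cube, Pi.card_Icc]
  have h : ((m : ℤ) + 1 - -(m : ℤ)).toNat = 2 * m + 1 := by omega
  simp only [Int.card_Icc, h, Finset.prod_const, Finset.card_univ, Fintype.card_fin]
  push_cast; ring

lemma neg_mem_cube {d m : ℕ} {k : Fin d → ℤ} (hk : k ∈ cube d m) : -k ∈ cube d m := by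
  rw [cube, Finset.mem_Icc] at hk ⊢
  exact ⟨neg_le_neg hk.2, neg_le.mp hk.1⟩

lemma ktilde_le (d m : ℕ) (θ : Fin d → ℝ) : ktilde d m θ ≤ (2 * (m : ℝ) + 1) ^ d := by
  calc ktilde d m θ ≤ ∑ _k ∈ cube d m, (1 : ℝ) := Finset.sum_le_sum fun k _ => cos_le_one _
    _ = (2 * (m : ℝ) + 1) ^ d := by rw [Finset.sum_const, nsmul_one, card_cube]

lemma ktilde_lt (d m : ℕ) {ρ : ℝ} (hρ : 1 < ρ) (θ : Fin d → ℝ) :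
    ktilde d m θ < ρ * (2 * (m : ℝ) + 1) ^ d :=
  (ktilde_le d m θ).trans_lt (lt_mul_of_one_lt_left (by positivity) hρ)

lemma continuous_lamTilde (d m : ℕ) {ρ : ℝ} (hρ : 1 < ρ) (h : ℝ) :
    Continuous (lamTilde d m ρ h) := by
  have hk : Continuous (ktilde d m) := by unfold ktilde; fun_prop
  exact continuous_const.mul
    ((continuous_const.sub hk).inv₀ fun θ => (sub_pos.2 (ktilde_lt d m hρ θ)).ne')

lemma sum_cos_pairing_sub (d m : ℕ) (θ : Fin d → ℝ) (j : Fin d → ℤ) :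
    ∑ k ∈ cube d m, cos (∑ l, θ l * ((j - k) l : ℝ)) =
      cos (∑ l, θ l * (j l : ℝ)) * ktilde d m θ := by
  have hsin : ∑ k ∈ cube d m, sin (∑ l, θ l * (k l : ℝ)) = 0 := by
    refine Function.Odd.finsetSum_eq_zero (fun k => ?_) (Finset.map_eq_of_subset ?_)
    · simp [Finset.sum_neg_distrib, sin_neg]
    · intro k hk
      rw [Finset.mem_map_equiv] at hk
      simpa using neg_mem_cube hk
  simp only [Pi.sub_apply, Int.cast_sub, mul_sub, Finset.sum_sub_distrib, cos_sub]
  rw [Finset.sum_add_distrib, ← Finset.mul_sum, ← Finset.mul_sum, hsin, mul_zero, add_zero,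
    ktilde]

open Complex in
lemma integral_cexp_mul_int_mul_I (n : ℤ) :
    ∫ t in -π..π, cexp (↑(t * n) * I) = ↑(if n = 0 then 2 * π else 0 : ℝ) := by
  split_ifs with hn
  · simp [hn]; ring
  have hc : (n : ℂ) * I ≠ 0 := by simp [hn, I_ne_zero]
  have hexp : ∀ s : ℝ, cexp ((n : ℂ) * I * s) = cexp (s * I) ^ n := fun s => by
    rw [← exp_int_mul]; ring_nf
  simp_rw [show ∀ t : ℝ, (↑(t * n) : ℂ) * I = (n : ℂ) * I * t from fun t => by push_cast; ring]
  rw [integral_exp_mul_complex hc, hexp, hexp]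
  simp [Complex.exp_neg, exp_pi_mul_I]

open Complex in
lemma integral_box_cexp_pairing (d : ℕ) (j : Fin d → ℤ) :
    ∫ θ in box d, cexp (↑(∑ l, θ l * (j l : ℝ)) * I) =
      ↑(if j = 0 then (2 * π) ^ d else 0 : ℝ) := by
  have hbox : volume.restrict (box d) = Measure.pi fun _ => volume.restrict (Set.Icc (-π) π) := by
    rw [box, ← Set.pi_univ_Icc, volume_pi, Measure.restrict_pi_pi]
  have hprod : ∀ θ : Fin d → ℝ,
      cexp (↑(∑ l, θ l * (j l : ℝ)) * I) = ∏ l, cexp (↑(θ l * (j l : ℝ)) * I) := fun θ => by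
    rw [← Complex.exp_sum, ← Finset.sum_mul, ofReal_sum]
  rw [hbox]
  simp_rw [hprod]
  rw [integral_fintype_prod_eq_prod fun l (t : ℝ) => cexp (↑(t * (j l : ℝ)) * I)]
  simp_rw [integral_Icc_eq_integral_Ioc,
    ← intervalIntegral.integral_of_le (neg_le_self pi_pos.le), integral_cexp_mul_int_mul_I,
    ← ofReal_prod, Finset.prod_ite_zero, Finset.prod_const, Finset.card_univ, Fintype.card_fin,
    Finset.mem_univ, forall_const, funext_iff, Pi.zero_apply]

lemma integral_box_cos_pairing (d : ℕ) (j : Fin d → ℤ) :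
    ∫ θ in box d, cos (∑ l, θ l * (j l : ℝ)) = if j = 0 then (2 * π) ^ d else 0 := by
  have hint : IntegrableOn
      (fun θ : Fin d → ℝ => Complex.exp (↑(∑ l, θ l * (j l : ℝ)) * Complex.I)) (box d) :=
    (by fun_prop : Continuous _).continuousOn.integrableOn_compact isCompact_Icc
  have hre := congrArg Complex.re (integral_box_cexp_pairing d j)
  rw [← RCLike.re_eq_complex_re, ← integral_re hint] at hre
  simp_rw [RCLike.re_eq_complex_re, Complex.exp_ofReal_mul_I_re] at hre
  rwa [Complex.ofReal_re] at hre

lemma mul_lam_sub_sum_lam_sub (d m : ℕ) {ρ : ℝ} (hρ : 1 < ρ) (h : ℝ) (j : Fin d → ℤ) :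
    ρ * (2 * (m : ℝ) + 1) ^ d * lam d m ρ h j - ∑ k ∈ cube d m, lam d m ρ h (j - k) =
      if j = 0 then h else 0 := by
  set c := ρ * (2 * (m : ℝ) + 1) ^ d
  set f : (Fin d → ℤ) → (Fin d → ℝ) → ℝ :=
    fun i θ => cos (∑ l, θ l * (i l : ℝ)) * lamTilde d m ρ h θ
  have hf : ∀ i, IntegrableOn (f i) (box d) := fun i => by
    have := continuous_lamTilde d m hρ h
    exact (by fun_prop : Continuous (f i)).continuousOn.integrableOn_compact isCompact_Icc
  have hpoint :
      ∀ θ, c * f j θ - ∑ k ∈ cube d m, f (j - k) θ = h * cos (∑ l, θ l * (j l : ℝ)) := by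
    intro θ
    have hD := (sub_pos.2 (ktilde_lt d m hρ θ)).ne'
    simp only [f, ← Finset.sum_mul, sum_cos_pairing_sub, lamTilde]
    field_simp
    ring
  calc c * lam d m ρ h j - ∑ k ∈ cube d m, lam d m ρ h (j - k)
      = ((2 * π) ^ d)⁻¹ * ∫ θ in box d, c * f j θ - ∑ k ∈ cube d m, f (j - k) θ := by
        simp only [lam, ← Finset.mul_sum]
        rw [integral_sub ((hf j).const_mul c) (integrable_finsetSum _ fun k _ => hf (j - k)),
          integral_const_mul, integral_finsetSum _ fun k _ => hf (j - k)]
        ring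
    _ = ((2 * π) ^ d)⁻¹ * (h * if j = 0 then (2 * π) ^ d else 0) := by
        simp_rw [hpoint, integral_const_mul, integral_box_cos_pairing]
    _ = if j = 0 then h else 0 := by
        split_ifs
        · field_simp
        · simp

theorem weights_convolution_inequality_general
    (d m : ℕ) (ρ h : ℝ) (hρ : 1 < ρ) (hh : 0 < h)
    (j : Fin d → ℤ) :
    ∑ k ∈ cube d m, lam d m ρ h (j - k) ≤ ρ * (2 * (m : ℝ) + 1) ^ d * lam d m ρ h j := by
  have key := mul_lam_sub_sum_lam_sub d m hρ h j
  split_ifs at key <;> linarith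

/-- the weights satisfy the convolution-type inequality
`Σ_{k∈V_m} λ_m^{j−k} ≤ ρ|V_m| λ_m^j` for every `j ∈ ℤ^d`. -/
theorem weights_convolution_inequality
    (d m : ℕ) (hd : 1 ≤ d) (hm : 1 ≤ m) (ρ h : ℝ) (hρ : 1 < ρ) (hh : 0 < h)
    (hnorm : ((2 * Real.pi) ^ d)⁻¹ * ∫ θ in box d, lamTilde d m ρ h θ = 1)
    (j : Fin d → ℤ) :
    ∑ k ∈ cube d m, lam d m ρ h (j - k) ≤ ρ * (2 * (m : ℝ) + 1) ^ d * lam d m ρ h j :=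
  weights_convolution_inequality_general d m ρ h hρ hh j
end

section
/- Suppose X: [0,T] → ℝ is continuous with X_0 = R_0 and satisfies X_t = ∫_0^t (b_s(X) + Λ_s(X)) ds + R_t, where for all t: b_t(X) ≤ C‖X‖_t whenever X_t ≥ 0, b_t(X) ≥ −C‖X‖_t whenever X_t ≤ 0, and |Λ_t(X)| ≤ K(1 + ‖X‖_t) with K = Σ_{k∈V_m} ‖ω^{0,k}‖. Then ‖X‖_T ≤ exp(T(C + K))(2‖R‖_T + TK), and hence ‖X‖_T ≤ exp(T(C+2K)) + 2 exp(T(C+K))‖R‖_T when K ≤ K (trivially). Here ‖X‖_t = sup_{s≤t}|X_s|. -/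
/-!
Where `X > 0`, the one-sided growth of `b` and the bound on `Λ` give
`b + Λ ≤ (C + K) ‖X‖ + K`. Integrating from the last time `σ ≤ t` with `X_σ ≤ 0` (or from
`σ = 0`, where `X_0 = R_0`) yields `X_t ≤ 2 ‖R‖_T + ∫₀ᵗ ((C + K) ‖X‖_s + K) ds`, the two values
of `R` costing `2 ‖R‖_T`; the same argument for `-X` bounds `|X_t|`, hence `‖X‖_t`. The running
supremum is continuous, so Gronwall's inequality applies and gives
`‖X‖_T ≤ exp (T (C + K)) (2 ‖R‖_T + T K)`; the second bound follows from `T K ≤ exp (T K)`.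
-/

open MeasureTheory intervalIntegral

/-- The running sup norm `‖X‖_t = sup_{0 ≤ s ≤ t} |X_s|`. -/
noncomputable def supNorm (X : ℝ → ℝ) (t : ℝ) : ℝ :=
  ⨆ s : Set.Icc (0 : ℝ) t, |X s|

open Set

section supNorm

variable {X : ℝ → ℝ} {s t M : ℝ}

lemma abs_le_supNorm (hX : ContinuousOn X (Icc 0 t)) (hs : s ∈ Icc 0 t) :
    |X s| ≤ supNorm X t := by
  have hbdd := isCompact_Icc.bddAbove_image (continuous_abs.comp_continuousOn hX)
  rw [image_eq_range] at hbdd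
  exact le_ciSup hbdd ⟨s, hs⟩

lemma supNorm_nonneg (hX : ContinuousOn X (Icc 0 t)) (ht : 0 ≤ t) : 0 ≤ supNorm X t :=
  (abs_nonneg _).trans (abs_le_supNorm hX ⟨le_rfl, ht⟩)

lemma supNorm_le (ht : 0 ≤ t) (h : ∀ s ∈ Icc 0 t, |X s| ≤ M) : supNorm X t ≤ M :=
  have : Nonempty (Icc (0 : ℝ) t) := ⟨⟨0, le_rfl, ht⟩⟩
  ciSup_le fun s => h s s.2

/-- Reparametrizing `[0, t]` by `[0, 1]` turns the running supremum into a supremum over a fixed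
compact set, to which `IsCompact.continuous_sSup` applies. -/
lemma continuousOn_supNorm (hX : Continuous X) : ContinuousOn (supNorm X) (Ici 0) := by
  have hcont : Continuous fun t => sSup ((fun r => |X (r * t)|) '' Icc 0 1) :=
    isCompact_Icc.continuous_sSup (by fun_prop)
  refine hcont.continuousOn.congr fun t (ht : 0 ≤ t) => ?_
  have hIcc : Icc 0 t = (fun r => r * t) '' Icc 0 1 := by
    rw [image_mul_right_Icc zero_le_one ht, zero_mul, one_mul]
  rw [supNorm, ← sSup_image' (f := fun s => |X s|), hIcc, image_image]

end supNorm

section Comparison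

variable {X f g R : ℝ → ℝ} {T M : ℝ}

lemma exists_last_nonpos {a t : ℝ} (hat : a ≤ t) (hX : ContinuousOn X (Icc a t)) :
    ∃ σ ∈ Icc a t, (σ = a ∨ X σ ≤ 0) ∧ ∀ s ∈ Ioc σ t, 0 < X s := by
  set S := Icc a t ∩ X ⁻¹' Iic 0
  rcases S.eq_empty_or_nonempty with hS | hS
  · refine ⟨a, left_mem_Icc.2 hat, .inl rfl, fun s hs => ?_⟩
    by_contra! hXs
    exact hS.subset ⟨Ioc_subset_Icc_self hs, hXs⟩
  · have hSc : IsCompact S := isCompact_Icc.of_isClosed_subset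
      (hX.preimage_isClosed_of_isClosed isClosed_Icc isClosed_Iic) inter_subset_left
    obtain ⟨hσ, hXσ⟩ := hSc.sSup_mem hS
    refine ⟨sSup S, hσ, .inr hXσ, fun s hs => ?_⟩
    by_contra! hXs
    exact hs.1.not_ge (le_csSup hSc.bddAbove ⟨⟨hσ.1.trans hs.1.le, hs.2⟩, hXs⟩)

lemma le_two_mul_add_integral_of_eq_integral_add (hX : ContinuousOn X (Icc 0 T))
    (hsol : ∀ t ∈ Icc 0 T, X t = (∫ s in 0..t, f s) + R t) (hR : ∀ t ∈ Icc 0 T, |R t| ≤ M)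
    (hg : IntervalIntegrable g volume 0 T) (hg0 : ∀ t ∈ Icc 0 T, 0 ≤ g t)
    (hfg : ∀ t ∈ Icc 0 T, 0 < X t → f t ≤ g t) {t : ℝ} (ht : t ∈ Icc 0 T) :
    X t ≤ 2 * M + ∫ s in 0..t, g s := by
  have hsub : Icc 0 t ⊆ Icc 0 T := Icc_subset_Icc_right ht.2
  have hM : 0 ≤ M := (abs_nonneg _).trans (hR t ht)
  have hRt := abs_le.1 (hR t ht)
  have hgt : IntervalIntegrable g volume 0 t :=
    hg.mono_set (uIcc_subset_uIcc_left (Icc_subset_uIcc ht))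
  have hg_tail : ∀ σ ∈ Icc 0 t, ∫ s in σ..t, g s ≤ ∫ s in 0..t, g s := fun σ hσ =>
    integral_mono_interval hσ.1 hσ.2 le_rfl
      ((ae_restrict_iff' measurableSet_Ioc).2
        (ae_of_all _ fun s hs => hg0 s (hsub (Ioc_subset_Icc_self hs)))) hgt
  have hg_nonneg : 0 ≤ ∫ s in 0..t, g s := by
    simpa using hg_tail t (right_mem_Icc.2 ht.1)
  by_cases hf : IntervalIntegrable f volume 0 t
  swap
  · rw [hsol t ht, integral_undef hf]
    linarith
  obtain ⟨σ, hσ, hσ_start, hpos⟩ := exists_last_nonpos ht.1 (hX.mono hsub)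
  have hσT : σ ∈ Icc 0 T := hsub hσ
  have hstart : X σ - R σ ≤ M := by
    rcases hσ_start with rfl | hXσ
    · simp [hsol 0 hσT, hM]
    · linarith [(abs_le.1 (hR σ hσT)).1]
  have hincr : X t - X σ = (∫ s in σ..t, f s) + (R t - R σ) := by
    rw [hsol t ht, hsol σ hσT, ← integral_interval_sub_left hf
      (hf.mono_set (uIcc_subset_uIcc_left (Icc_subset_uIcc hσ)))]
    ring
  have hfg_tail : ∫ s in σ..t, f s ≤ ∫ s in σ..t, g s :=
    integral_mono_on_of_le_Ioo hσ.2 (hf.mono_set (uIcc_subset_uIcc_right (Icc_subset_uIcc hσ)))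
      (hgt.mono_set (uIcc_subset_uIcc_right (Icc_subset_uIcc hσ))) fun s hs =>
        hfg s (hsub ⟨hσ.1.trans hs.1.le, hs.2.le⟩) (hpos s (Ioo_subset_Ioc_self hs))
  linarith [hg_tail σ hσ]

lemma supNorm_le_two_mul_add_integral_of_eq_integral_add (hX : ContinuousOn X (Icc 0 T))
    (hsol : ∀ t ∈ Icc 0 T, X t = (∫ s in 0..t, f s) + R t) (hR : ∀ t ∈ Icc 0 T, |R t| ≤ M)
    (hg : IntervalIntegrable g volume 0 T) (hg0 : ∀ t ∈ Icc 0 T, 0 ≤ g t)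
    (hfg : ∀ t ∈ Icc 0 T, 0 < X t → f t ≤ g t) (hgf : ∀ t ∈ Icc 0 T, X t < 0 → -g t ≤ f t)
    {t : ℝ} (ht : t ∈ Icc 0 T) :
    supNorm X t ≤ 2 * M + ∫ s in 0..t, g s := by
  have hsol_neg : ∀ s ∈ Icc 0 T, -X s = (∫ u in 0..s, -f u) + -R s := fun s hs => by
    rw [hsol s hs, intervalIntegral.integral_neg, neg_add]
  have habs : ∀ s ∈ Icc 0 T, |X s| ≤ 2 * M + ∫ u in 0..s, g u := fun s hs => abs_le.2
    ⟨neg_le.1 <| le_two_mul_add_integral_of_eq_integral_add hX.neg hsol_neg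
        (by simpa only [abs_neg]) hg hg0 (fun u hu hXu => neg_le.1 (hgf u hu (neg_pos.1 hXu))) hs,
      le_two_mul_add_integral_of_eq_integral_add hX hsol hR hg hg0 hfg hs⟩
  refine supNorm_le ht.1 fun s hs => (habs s ⟨hs.1, hs.2.trans ht.2⟩).trans ?_
  gcongr 2 * M + ?_
  exact integral_mono_interval le_rfl hs.1 hs.2
    ((ae_restrict_iff' measurableSet_Ioc).2
      (ae_of_all _ fun u hu => hg0 u ⟨hu.1.le, hu.2.trans ht.2⟩))
    (hg.mono_set (uIcc_subset_uIcc_left (Icc_subset_uIcc ht)))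

end Comparison

open Real in
/-- Gronwall: `ψ t = A + ∫₀ᵗ (c φ + K)` satisfies `ψ' ≤ c ψ + K`, so
`t ↦ exp (-(c t)) ψ t - K t` is antitone. -/
lemma le_exp_mul_mul_add_of_le_add_integral {φ : ℝ → ℝ} {A c K T : ℝ} (hc : 0 ≤ c) (hK : 0 ≤ K)
    (hφ : ContinuousOn φ (Icc 0 T)) (h : ∀ t ∈ Icc 0 T, φ t ≤ A + ∫ s in 0..t, (c * φ s + K))
    {t : ℝ} (ht : t ∈ Icc 0 T) :
    φ t ≤ exp (c * t) * (A + K * t) := by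
  have hT : 0 ≤ T := ht.1.trans ht.2
  set ψ : ℝ → ℝ := fun t => A + ∫ s in 0..t, (c * φ s + K)
  have hg : ContinuousOn (fun s => c * φ s + K) (Icc 0 T) := by fun_prop
  have hψ : ContinuousOn ψ (Icc 0 T) := by
    have hprim := continuousOn_primitive_interval (μ := volume) (a := 0) (b := T)
      (f := fun s => c * φ s + K) (by rw [uIcc_of_le hT]; exact hg.integrableOn_Icc)
    rw [uIcc_of_le hT] at hprim
    exact continuousOn_const.add hprim
  have hψ' : ∀ x ∈ Ioo 0 T, HasDerivAt ψ (c * φ x + K) x := fun x hx =>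
    (integral_hasDerivAt_right
      ((hg.mono (Icc_subset_Icc_right hx.2.le)).intervalIntegrable_of_Icc hx.1.le)
      ((hg.mono Ioo_subset_Icc_self).stronglyMeasurableAtFilter isOpen_Ioo x hx)
      (hg.continuousAt (Icc_mem_nhds hx.1 hx.2))).const_add A
  have hF : AntitoneOn (fun t => exp (-(c * t)) * ψ t - K * t) (Icc 0 T) := by
    refine antitoneOn_of_hasDerivWithinAt_nonpos (convex_Icc 0 T) (by fun_prop) (fun x hx => ?_)
      (f' := fun x => exp (-(c * x)) * (c * (φ x - ψ x) + K) - K) (fun x hx => ?_)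
    all_goals rw [interior_Icc] at hx
    · have hlin : HasDerivAt (fun y => -(c * y)) (-c) x := by
        simpa using ((hasDerivAt_id' x).const_mul c).fun_neg
      have hd : HasDerivAt (fun y => exp (-(c * y)) * ψ y - K * y)
          (exp (-(c * x)) * -c * ψ x + exp (-(c * x)) * (c * φ x + K) - K) x := by
        simpa using (hlin.exp.fun_mul (hψ' x hx)).fun_sub ((hasDerivAt_id' x).const_mul K)
      exact hd.hasDerivWithinAt.congr_deriv (by ring)
    · have hφψ : c * φ x ≤ c * ψ x := mul_le_mul_of_nonneg_left (h x (Ioo_subset_Icc_self hx)) hc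
      have hexp : exp (-(c * x)) ≤ 1 := exp_le_one_iff.2 (by nlinarith [hx.1])
      nlinarith [exp_pos (-(c * x))]
  have hFt := hF (left_mem_Icc.2 hT) ht ht.1
  simp only [ψ, mul_zero, neg_zero, exp_zero, integral_same, one_mul, add_zero, sub_zero,
    exp_neg] at hFt
  calc φ t ≤ ψ t := h t ht
    _ ≤ exp (c * t) * (A + K * t) := by
      rw [← inv_mul_le_iff₀ (exp_pos _)]
      linarith

theorem solution_a_priori_bound_general
    (T C K : ℝ) (hT : 0 < T) (hC : 0 < C) (hK : 0 ≤ K)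
    (b Λ : ℝ → (ℝ → ℝ) → ℝ) (X R : ℝ → ℝ)
    (hXc : Continuous X) (hRc : Continuous R)
    (hb_upper : ∀ t ∈ Set.Icc (0 : ℝ) T, 0 ≤ X t → b t X ≤ C * supNorm X t)
    (hb_lower : ∀ t ∈ Set.Icc (0 : ℝ) T, X t ≤ 0 → -(C * supNorm X t) ≤ b t X)
    (hΛ : ∀ t ∈ Set.Icc (0 : ℝ) T, |Λ t X| ≤ K * (1 + supNorm X t))
    (hsol : ∀ t ∈ Set.Icc (0 : ℝ) T,
      X t = (∫ s in (0 : ℝ)..t, (b s X + Λ s X)) + R t) :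
    supNorm X T ≤ Real.exp (T * (C + K)) * (2 * supNorm R T + T * K) ∧
    supNorm X T ≤ Real.exp (T * (C + 2 * K)) + 2 * Real.exp (T * (C + K)) * supNorm R T := by
  have hφ : ContinuousOn (supNorm X) (Icc 0 T) :=
    (continuousOn_supNorm hXc).mono Icc_subset_Ici_self
  have hg : ContinuousOn (fun s => (C + K) * supNorm X s + K) (Icc 0 T) := by fun_prop
  have hbound : ∀ t ∈ Icc 0 T,
      supNorm X t ≤ 2 * supNorm R T + ∫ s in 0..t, ((C + K) * supNorm X s + K) :=
    fun t => supNorm_le_two_mul_add_integral_of_eq_integral_add hXc.continuousOn hsol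
      (fun s => abs_le_supNorm hRc.continuousOn) (hg.intervalIntegrable_of_Icc hT.le)
      (fun s hs => by have := supNorm_nonneg hXc.continuousOn hs.1; positivity)
      (fun s hs hXs => by linarith [hb_upper s hs hXs.le, (abs_le.1 (hΛ s hs)).2])
      (fun s hs hXs => by linarith [hb_lower s hs hXs.le, (abs_le.1 (hΛ s hs)).1])
  have hgronwall := le_exp_mul_mul_add_of_le_add_integral (by positivity) hK hφ hbound
    (right_mem_Icc.2 hT.le)
  rw [mul_comm (C + K), mul_comm K] at hgronwall
  refine ⟨hgronwall, ?_⟩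
  calc supNorm X T ≤ Real.exp (T * (C + K)) * (2 * supNorm R T + T * K) := hgronwall
    _ ≤ Real.exp (T * (C + K)) * (2 * supNorm R T + Real.exp (T * K)) := by
      gcongr
      linarith [Real.add_one_le_exp (T * K)]
    _ = Real.exp (T * (C + 2 * K)) + 2 * Real.exp (T * (C + K)) * supNorm R T := by
      rw [mul_add, ← Real.exp_add]
      ring_nf

/-- a priori bound on the solution of
`X_t = ∫_0^t (b_s(X) + Λ_s(X)) ds + R_t` under one-sided growth conditions on `b`
and the bound `|Λ_t(X)| ≤ K(1 + ‖X‖_t)`: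
`‖X‖_T ≤ exp(T(C+K))(2‖R‖_T + TK)`, and hence
`‖X‖_T ≤ exp(T(C+2K)) + 2 exp(T(C+K))‖R‖_T`. -/
theorem solution_a_priori_bound
    (T C K : ℝ) (hT : 0 < T) (hC : 0 < C) (hK : 0 ≤ K)
    (b Λ : ℝ → (ℝ → ℝ) → ℝ) (X R : ℝ → ℝ)
    (hXc : Continuous X) (hRc : Continuous R) (hX0 : X 0 = R 0)
    (hb_upper : ∀ t ∈ Set.Icc (0 : ℝ) T, 0 ≤ X t → b t X ≤ C * supNorm X t)
    (hb_lower : ∀ t ∈ Set.Icc (0 : ℝ) T, X t ≤ 0 → -(C * supNorm X t) ≤ b t X)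
    (hΛ : ∀ t ∈ Set.Icc (0 : ℝ) T, |Λ t X| ≤ K * (1 + supNorm X t))
    (hsol : ∀ t ∈ Set.Icc (0 : ℝ) T,
      X t = (∫ s in (0 : ℝ)..t, (b s X + Λ s X)) + R t) :
    supNorm X T ≤ Real.exp (T * (C + K)) * (2 * supNorm R T + T * K) ∧
    supNorm X T ≤ Real.exp (T * (C + 2 * K)) + 2 * Real.exp (T * (C + K)) * supNorm R T :=
  solution_a_priori_bound_general T C K hT hC hK b Λ X R hXc hRc hb_upper hb_lower hΛ hsol
end
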